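/- Let A be an (α_{n,k},α_{n,k}|α_{n,k},α_{n,k})-ASM, where α_{n,k} has k entries +1 followed by n−k entries −1. Then the off-diagonal blocks A[1..k | k+1..n] and A[k+1..n | 1..k] are zero matrices. -/

import Mathlib

/-- The nonzero entries of a list of integers alternate in sign. -/
def AltList (l : List ℤ) : Prop :=
  List.Chain' (fun x y => x * y = -1) (l.filter (· ≠ 0))

/-- A vector of ±1s. -/
def SignVec {p : ℕ} (w : Fin p → ℤ) : Prop := ∀ i, w i = 1 ∨ w i = -1

/-- `A` is a (u,u'|v,v')-ASM: a (0,±1)-matrix such that in the bordered matrix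
(u on top, u' on bottom, v on the left, v' on the right, zeros in corners)
the nonzero entries of each interior row and column alternate in sign. -/
def IsGASM {m n : ℕ} (u u' : Fin n → ℤ) (v v' : Fin m → ℤ)
    (A : Matrix (Fin m) (Fin n) ℤ) : Prop :=
  (∀ i j, A i j = 0 ∨ A i j = 1 ∨ A i j = -1) ∧
  (∀ i : Fin m, AltList (v i :: (List.ofFn fun j => A i j) ++ [v' i])) ∧
  (∀ j : Fin n, AltList (u j :: (List.ofFn fun i => A i j) ++ [u' j]))

/-- Ordinary alternating sign matrix, via the bordered formulation with all borders −1. -/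
def IsASM {n : ℕ} (A : Matrix (Fin n) (Fin n) ℤ) : Prop :=
  IsGASM (fun _ => -1) (fun _ => -1) (fun _ => -1) (fun _ => -1) A

/-- The vector with k entries +1 followed by n−k entries −1. -/
def alphaVec (n k : ℕ) : Fin n → ℤ := fun j => if (j : ℕ) < k then 1 else -1

/-!
If a line of the bordered matrix starts with the sign `s`, the nonzero interior entries
alternate `-s, s, -s, …`, so its partial sums only take the values `0` and `-s`; if the line
also ends with `s`, its full sum is `-s`.

In the block of rows `i < k` and columns `j ≥ k`, each row therefore contributes
`-1 - (prefix sum) ≤ 0`, while every column's partial sums from the top lie in `{0, 1}`.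
Summing the first `t ≤ k` rows of the block both ways shows that all these column partial sums
vanish, hence so does every entry. The other block is the same block of the transpose.
-/

open Finset Matrix

theorem altList_cons_zero {s : ℤ} {l : List ℤ} : AltList (s :: 0 :: l) ↔ AltList (s :: l) := by
  simp [AltList, List.filter_cons]

theorem altList_cons_cons {s a : ℤ} {l : List ℤ} (hs : s ≠ 0) (ha : a ≠ 0) :
    AltList (s :: a :: l) ↔ s * a = -1 ∧ AltList (a :: l) := by
  simp only [AltList, List.filter_cons, ne_eq, hs, ha, not_false_eq_true, decide_true, if_true]
  exact List.isChain_cons_cons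

theorem AltList.sum_take_eq_zero_or_neg {s : ℤ} (hs : s ≠ 0) {l r : List ℤ}
    (h : AltList (s :: l ++ r)) (m : ℕ) : (l.take m).sum = 0 ∨ (l.take m).sum = -s := by
  induction l generalizing s m with
  | nil => simp
  | cons a l ih =>
    cases m with
    | zero => simp
    | succ m =>
      rw [List.take_succ_cons, List.sum_cons]
      by_cases ha : a = 0
      · subst ha
        simpa using ih hs (altList_cons_zero.1 h) m
      · obtain ⟨hsa, htail⟩ := (altList_cons_cons hs ha).1 h
        have : a = -s := by
          rcases Int.eq_one_or_neg_one_of_mul_eq_neg_one hsa with rfl | rfl <;> omega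
        rcases ih ha htail m with h' | h' <;> omega

theorem AltList.sum_eq_neg_of_bordered {s : ℤ} (hs : s ≠ 0) {l : List ℤ}
    (h : AltList (s :: l ++ [s])) : l.sum = -s := by
  have h₁ := AltList.sum_take_eq_zero_or_neg hs h l.length
  have h₂ := AltList.sum_take_eq_zero_or_neg hs (l := l ++ [s]) (r := []) (by simpa using h)
    (l.length + 1)
  rw [List.take_length] at h₁
  rw [List.take_of_length_le (by simp), List.sum_append, List.sum_singleton] at h₂
  omega

theorem sum_prefix_eq_zero_of_sum_rows_nonpos {κ : Type*} {n k : ℕ} {A : Fin n → κ → ℤ}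
    {C : Finset κ} (hrow : ∀ i : Fin n, i.val < k → ∑ j ∈ C, A i j ≤ 0)
    (hcol : ∀ j ∈ C, ∀ t ≤ k, 0 ≤ ∑ i : Fin n with i.val < t, A i j)
    {t : ℕ} (ht : t ≤ k) {j : κ} (hj : j ∈ C) : ∑ i : Fin n with i.val < t, A i j = 0 := by
  refine (sum_eq_zero_iff_of_nonneg fun j hj => hcol j hj t ht).1 (le_antisymm ?_
    (sum_nonneg fun j hj => hcol j hj t ht)) j hj
  rw [sum_comm]
  exact sum_nonpos fun i hi => hrow i ((mem_filter.1 hi).2.trans_le ht)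

theorem eq_zero_of_sum_rows_nonpos_of_sum_prefix_nonneg {κ : Type*} {n k : ℕ}
    {A : Fin n → κ → ℤ} {C : Finset κ} (hrow : ∀ i : Fin n, i.val < k → ∑ j ∈ C, A i j ≤ 0)
    (hcol : ∀ j ∈ C, ∀ t ≤ k, 0 ≤ ∑ i : Fin n with i.val < t, A i j)
    {i : Fin n} (hi : i.val < k) {j : κ} (hj : j ∈ C) : A i j = 0 := by
  have hsucc : ∑ i' : Fin n with i'.val < i.val + 1, A i' j
      = A i j + ∑ i' : Fin n with i'.val < i.val, A i' j := by
    have : univ.filter (fun i' : Fin n => i'.val < i.val + 1)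
        = insert i (univ.filter fun i' : Fin n => i'.val < i.val) := by
      ext i'
      simp only [mem_filter, mem_univ, true_and, mem_insert, Fin.ext_iff]
      omega
    rw [this, sum_insert (by simp)]
  rw [sum_prefix_eq_zero_of_sum_rows_nonpos hrow hcol (t := i.val + 1) hi hj,
    sum_prefix_eq_zero_of_sum_rows_nonpos hrow hcol hi.le hj] at hsucc
  omega

section IsGASM

variable {m n : ℕ} {u u' : Fin n → ℤ} {v v' : Fin m → ℤ} {A : Matrix (Fin m) (Fin n) ℤ}

theorem IsGASM.transpose (hA : IsGASM u u' v v' A) : IsGASM v v' u u' Aᵀ :=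
  ⟨fun j i => hA.1 i j, hA.2.2, hA.2.1⟩

theorem IsGASM.sum_row_prefix (hA : IsGASM u u' v v' A) {i : Fin m} (hv : v i ≠ 0) (t : ℕ) :
    ∑ j : Fin n with j.val < t, A i j = 0 ∨ ∑ j : Fin n with j.val < t, A i j = -v i := by
  rw [← List.sum_take_ofFn]
  exact AltList.sum_take_eq_zero_or_neg hv (hA.2.1 i) t

theorem IsGASM.sum_row (hA : IsGASM u u' v v' A) {i : Fin m} (hv : v i ≠ 0) (hv' : v' i = v i) :
    ∑ j, A i j = -v i := by
  rw [← List.sum_ofFn]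
  exact AltList.sum_eq_neg_of_bordered hv (hv' ▸ hA.2.1 i)

theorem IsGASM.eq_zero_of_lt_of_not_lt {k l : ℕ}
    (hA : IsGASM (alphaVec n l) u' (alphaVec m k) (alphaVec m k) A) {i : Fin m} {j : Fin n}
    (hi : (i : ℕ) < k) (hj : ¬ (j : ℕ) < l) : A i j = 0 := by
  refine eq_zero_of_sum_rows_nonpos_of_sum_prefix_nonneg (k := k)
    (C := {j : Fin n | ¬ j.val < l}) ?_ ?_ hi (by simpa using hj)
  · intro i hi
    have hv : alphaVec m k i = 1 := if_pos hi
    have htotal := hA.sum_row (i := i) (by simp [hv]) rfl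
    have hprefix := hA.sum_row_prefix (i := i) (by simp [hv]) l
    rw [← sum_filter_add_sum_filter_not univ (fun j : Fin n => j.val < l)] at htotal
    rw [hv] at htotal hprefix
    omega
  · intro j hj t _
    have hu : alphaVec n l j = -1 := if_neg (by simpa using hj)
    have := hA.transpose.sum_row_prefix (i := j) (by simp [hu]) t
    simp only [transpose_apply, hu, neg_neg] at this
    omega

end IsGASM

theorem stmt12_general {n k : ℕ} (A : Matrix (Fin n) (Fin n) ℤ)
    (hA : IsGASM (alphaVec n k) (alphaVec n k) (alphaVec n k) (alphaVec n k) A) :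
    ∀ i j : Fin n,
      ((i : ℕ) < k ∧ ¬ (j : ℕ) < k → A i j = 0) ∧
      (¬ (i : ℕ) < k ∧ (j : ℕ) < k → A i j = 0) :=
  fun _ _ => ⟨fun ⟨hi, hj⟩ => hA.eq_zero_of_lt_of_not_lt hi hj,
    fun ⟨hi, hj⟩ => hA.transpose.eq_zero_of_lt_of_not_lt hj hi⟩

theorem stmt12 {n k : ℕ} (hk : k ≤ n) (A : Matrix (Fin n) (Fin n) ℤ)
    (hA : IsGASM (alphaVec n k) (alphaVec n k) (alphaVec n k) (alphaVec n k) A) :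
    ∀ i j : Fin n,
      ((i : ℕ) < k ∧ ¬ (j : ℕ) < k → A i j = 0) ∧
      (¬ (i : ℕ) < k ∧ (j : ℕ) < k → A i j = 0) :=
  stmt12_general A hA
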